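/- (Undecidability of (k, f)-Approximate Reverse Engineering.) Let f : ℕ → ℚ be a computable (total) function and let k : ℕ with 1 ≤ k. Then the predicate on codes c of partial recursive functions given by: 'for every n : ℕ, the computation c.eval n converges to (the encoding of) some rational q_n satisfying |f(n)| / k ≤ |q_n| and |q_n| ≤ k · |f(n)|' is not a computable (decidable) predicate. In particular, no Turing machine can decide, for an arbitrary code c, whether the function it computes is a k-approximation of f. -/

import Mathlib

namespace ApproxREAux

open Encodable

/-- The encoding of `ℚ` used in the theorem statement. -/
abbrev E : ℚ → ℕ := @Encodable.encode ℚ Rat.instEncodable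

/-- The encoding of `ℚ` coming from the `Primcodable` instance (used by `Computable`). -/
abbrev EP : ℚ → ℕ := @Encodable.encode ℚ Primcodable.toEncodable

lemma E_eq (q : ℚ) : E q = Nat.pair (Equiv.intEquivNat q.num) q.den := rfl

def H (a : ℕ) : ℕ := a / 2 + a % 2

lemma primrec_H : Primrec H :=
  Primrec.nat_add.comp (Primrec.nat_div.comp .id (.const 2))
    (Primrec.nat_mod.comp .id (.const 2))

lemma H_intEquivNat (z : ℤ) : H (Equiv.intEquivNat z) = z.natAbs := by
  cases z with
  | ofNat n =>
    have h : (Equiv.intEquivNat (Int.ofNat n) : ℕ) = 2 * n := rfl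
    rw [H, h]; simp
  | negSucc n =>
    have h : (Equiv.intEquivNat (Int.negSucc n) : ℕ) = 2 * n + 1 := rfl
    rw [H, h]; simp; omega

/-- Bounded check: no common divisor `≥ 2` below `k` of `H m.unpair.1` and `m.unpair.2`. -/
def bAll : ℕ → ℕ → Bool := fun m k =>
  k.rec (motive := fun _ => Bool) true fun d ih =>
    ih && !(decide (2 ≤ d) && decide (H m.unpair.1 % d = 0) && decide (m.unpair.2 % d = 0))

lemma primrec_bAll : Primrec₂ bAll := by
  have hg : Primrec fun p : ℕ × (ℕ × Bool) =>
      (p.2.2 && !(decide (2 ≤ p.2.1) && decide (H p.1.unpair.1 % p.2.1 = 0) &&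
        decide (p.1.unpair.2 % p.2.1 = 0)) : Bool) :=
    Primrec.and.comp (Primrec.snd.comp Primrec.snd)
      (Primrec.not.comp <| Primrec.and.comp
        (Primrec.and.comp
          (Primrec.nat_le.comp (.const 2) (Primrec.fst.comp Primrec.snd)).decide
          (Primrec.eq.comp
            (Primrec.nat_mod.comp
              (primrec_H.comp (Primrec.fst.comp (Primrec.unpair.comp Primrec.fst)))
              (Primrec.fst.comp Primrec.snd)) (.const 0)).decide)
        (Primrec.eq.comp
          (Primrec.nat_mod.comp
            (Primrec.snd.comp (Primrec.unpair.comp Primrec.fst))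
            (Primrec.fst.comp Primrec.snd)) (.const 0)).decide)
  exact (Primrec.nat_rec (Primrec.const true) hg.to₂).of_eq fun m k => rfl

lemma bAll_iff (m k : ℕ) : bAll m k = true ↔
    ∀ d < k, ¬(2 ≤ d ∧ H m.unpair.1 % d = 0 ∧ m.unpair.2 % d = 0) := by
  induction k with
  | zero => simp [bAll]
  | succ k ih =>
    have h : bAll m (k + 1) = (bAll m k &&
        !(decide (2 ≤ k) && decide (H m.unpair.1 % k = 0) && decide (m.unpair.2 % k = 0))) := rfl
    rw [h, Bool.and_eq_true, ih]
    constructor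
    · rintro ⟨h1, h2⟩ d hd
      rcases Nat.lt_succ_iff_lt_or_eq.1 hd with hd' | rfl
      · exact h1 d hd'
      · simp only [Bool.not_eq_true', Bool.and_eq_false_iff, decide_eq_false_iff_not] at h2
        tauto
    · intro h1
      refine ⟨fun d hd => h1 d (Nat.lt_succ_of_lt hd), ?_⟩
      have := h1 k (Nat.lt_succ_self k)
      simp only [Bool.not_eq_true', Bool.and_eq_false_iff, decide_eq_false_iff_not]
      tauto

def sb (m : ℕ) : Bool := decide (0 < m.unpair.2) && bAll m (m.unpair.2 + 1)

lemma primrec_sb : Primrec sb :=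
  Primrec.and.comp
    (Primrec.nat_lt.comp (.const 0) (Primrec.snd.comp Primrec.unpair)).decide
    (primrec_bAll.comp .id (Primrec.succ.comp (Primrec.snd.comp Primrec.unpair)))

lemma sb_iff (m : ℕ) : sb m = true ↔ m ∈ Set.range E := by
  rw [sb, Bool.and_eq_true, decide_eq_true_iff, bAll_iff]
  constructor
  · rintro ⟨hd, hall⟩
    set a := m.unpair.1 with ha
    set d := m.unpair.2 with hdd
    set z : ℤ := Equiv.intEquivNat.symm a with hz
    have hza : Equiv.intEquivNat z = a := Equiv.apply_symm_apply _ _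
    have hH : H a = z.natAbs := by rw [← hza, H_intEquivNat]
    have hcop : z.natAbs.Coprime d := by
      rcases Nat.lt_or_ge (Nat.gcd z.natAbs d) 2 with hg | hg
      · have hg0 : 0 < Nat.gcd z.natAbs d := Nat.gcd_pos_of_pos_right _ hd
        unfold Nat.Coprime; omega
      · exfalso
        have hgd : Nat.gcd z.natAbs d ≤ d := Nat.le_of_dvd hd (Nat.gcd_dvd_right _ _)
        refine hall (Nat.gcd z.natAbs d) (by omega) ⟨hg, ?_, ?_⟩
        · rw [hH]; exact Nat.mod_eq_zero_of_dvd (Nat.gcd_dvd_left _ _)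
        · exact Nat.mod_eq_zero_of_dvd (Nat.gcd_dvd_right _ _)
    exact ⟨⟨z, d, Nat.pos_iff_ne_zero.mp hd, hcop⟩, by
      rw [E_eq]; simp only [hza]; exact Nat.pair_unpair m⟩
  · rintro ⟨q, rfl⟩
    rw [E_eq, Nat.unpair_pair]
    refine ⟨q.pos, fun d hd ⟨h2, hnum, hden⟩ => ?_⟩
    rw [H_intEquivNat] at hnum
    have h1 : d ∣ Nat.gcd q.num.natAbs q.den :=
      Nat.dvd_gcd (Nat.dvd_of_mod_eq_zero hnum) (Nat.dvd_of_mod_eq_zero hden)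
    rw [q.reduced] at h1
    have := Nat.le_of_dvd Nat.one_pos h1
    omega

def cnt : ℕ → ℕ := Nat.rec 0 fun n ih => bif sb n then ih + 1 else ih

lemma primrec_cnt : Primrec cnt :=
  Primrec.nat_rec₁ 0
    ((Primrec.cond (primrec_sb.comp Primrec.fst)
      (Primrec.succ.comp Primrec.snd) Primrec.snd).to₂)

lemma cnt_eq (x : ℕ) : cnt x = (List.range x).countP sb := by
  induction x with
  | zero => simp [cnt]
  | succ x ih =>
    have h : cnt (x + 1) = bif sb x then cnt x + 1 else cnt x := rfl
    rw [h, List.range_succ, List.countP_append, ih]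
    cases hs : sb x <;> simp [List.countP_cons, hs]

lemma encodeP_eq (q : ℚ) : EP q = cnt (E q) := by
  have base : EP q =
      (List.range (E q)).countP
        (fun j => @decide (j ∈ Set.range E) (@Encodable.decidableRangeEncode ℚ Rat.instEncodable j)) :=
    rfl
  rw [base, cnt_eq]
  refine List.countP_congr fun j _ => ?_
  by_cases hj : j ∈ Set.range E
  · exact iff_of_true
      (@decide_eq_true _ (@Encodable.decidableRangeEncode ℚ Rat.instEncodable j) hj)
      ((sb_iff j).2 hj)
  · exact iff_of_false
      (fun hd => hj (@of_decide_eq_true _ (@Encodable.decidableRangeEncode ℚ Rat.instEncodable j) hd))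
      (fun hs => hj ((sb_iff j).1 hs))

lemma check_iff (q : ℚ) (m : ℕ) :
    (sb m && (cnt m == EP q)) = true ↔ m = E q := by
  constructor
  · rintro h
    rw [Bool.and_eq_true, beq_iff_eq] at h
    obtain ⟨q', rfl⟩ := (sb_iff m).1 h.1
    have h2 : EP q' = EP q := by rw [encodeP_eq]; exact h.2
    have : q' = q := @Encodable.encode_injective ℚ Primcodable.toEncodable q' q h2
    rw [this]
  · rintro rfl
    rw [Bool.and_eq_true, beq_iff_eq, encodeP_eq]
    exact ⟨(sb_iff _).2 ⟨q, rfl⟩, rfl⟩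

end ApproxREAux

/-- Undecidability of (k, f)-Approximate Reverse Engineering: for any
computable total `f : ℕ → ℚ` and any `k ≥ 1`, the predicate on codes `c` asserting
that on every input `n`, `c.eval n` converges to the encoding of some rational `q`
with `|f n| / k ≤ |q| ≤ k * |f n|` is not a computable predicate. -/
theorem approximate_re_undecidable (f : ℕ → ℚ) (hf : Computable f)
    (k : ℕ) (hk : 1 ≤ k) :
    ¬ ComputablePred fun c : Nat.Partrec.Code =>
        ∀ n : ℕ, ∃ q : ℚ, Encodable.encode q ∈ c.eval n ∧
          |f n| / (k : ℚ) ≤ |q| ∧ |q| ≤ (k : ℚ) * |f n| := by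
  open ApproxREAux in
  intro h
  set C : Set (ℕ →. ℕ) := {F | ∀ n : ℕ, ∃ q : ℚ, E q ∈ F n ∧
    |f n| / (k : ℚ) ≤ |q| ∧ |q| ≤ (k : ℚ) * |f n|} with hC
  -- the reference function: on input `n`, search for the `E`-encoding of `f n`
  set F : ℕ →. ℕ := fun n =>
    Nat.rfind fun m => Part.some (sb m && (cnt m == EP (f n))) with hFdef
  have hcheck : Computable fun p : ℕ × ℕ =>
      sb p.2 && (cnt p.2 == EP (f p.1)) := by
    have h1 : Computable fun p : ℕ × ℕ => sb p.2 :=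
      (primrec_sb.comp Primrec.snd).to_comp
    have h2 : Computable fun p : ℕ × ℕ => EP (f p.1) :=
      Computable.encode.comp (hf.comp Computable.fst)
    have h3 : Computable fun p : ℕ × ℕ => cnt p.2 == EP (f p.1) :=
      Primrec.beq.to_comp.comp ((primrec_cnt.comp Primrec.snd).to_comp) h2
    exact Primrec.and.to_comp.comp h1 h3
  have hFp : Nat.Partrec F := by
    rw [hFdef]
    exact Partrec.nat_iff.1 (Partrec.rfind hcheck.to₂.partrec₂)
  have hmem : ∀ n, E (f n) ∈ F n := by
    intro n
    refine Nat.mem_rfind.2 ⟨?_, fun {m} hm => ?_⟩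
    · exact Part.mem_some_iff.2 ((check_iff (f n) _).2 rfl).symm
    · refine Part.mem_some_iff.2 ?_
      have hne : (sb m && (cnt m == EP (f n))) ≠ true := fun hb =>
        (Nat.ne_of_lt hm) ((check_iff (f n) m).1 hb)
      exact (Bool.eq_false_iff.2 hne).symm
  have hk1 : (1 : ℚ) ≤ (k : ℚ) := by exact_mod_cast hk
  have hFC : F ∈ C := by
    intro n
    exact ⟨f n, hmem n, div_le_self (abs_nonneg _) hk1,
      le_mul_of_one_le_left (abs_nonneg _) hk1⟩
  have hGC := ComputablePred.rice C h hFp Nat.Partrec.none hFC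
  obtain ⟨q, hq, -⟩ := hGC 0
  exact (Part.notMem_none _) hq
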